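/- For every probability distribution π' on 𝕏, every fixed τ ≥ 1, and every D > 0, whenever T is large enough that TD > τ D_max, the following chain of inequalities holds: R^E_{J_τ(X^T_{[π',P]})}(TD) ≤ R^E_{X^T_{[π',P]}}(TD) ≤ R^E_{J_τ(X^T_{[π',P]})}(TD − τ D_max). -/

import Mathlib

open Filter Finset

/-- `μ` is a probability distribution on the finite set `𝕏`. -/
def IsProbDist {𝕏 : Type} [Fintype 𝕏] (μ : 𝕏 → ℝ) : Prop :=
  (∀ x, 0 ≤ μ x) ∧ ∑ x, μ x = 1

/-- `P` is a stochastic (transition probability) matrix on `𝕏`. -/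
def IsStochastic {𝕏 : Type} [Fintype 𝕏] (P : 𝕏 → 𝕏 → ℝ) : Prop :=
  (∀ x y, 0 ≤ P x y) ∧ ∀ x, ∑ y, P x y = 1

/-- `n`-th power of the transition matrix `P`. -/
def matPow {𝕏 : Type} [Fintype 𝕏] [DecidableEq 𝕏] (P : 𝕏 → 𝕏 → ℝ) : ℕ → 𝕏 → 𝕏 → ℝ
  | 0 => fun x y => if x = y then 1 else 0
  | n + 1 => fun x y => ∑ z, matPow P n x z * P z y

/-- Irreducible and aperiodic chain on a finite state space, i.e. primitive transition matrix:
some power of `P` has all entries strictly positive. -/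
def IsIrreducibleAperiodic {𝕏 : Type} [Fintype 𝕏] [DecidableEq 𝕏] (P : 𝕏 → 𝕏 → ℝ) : Prop :=
  ∃ m : ℕ, 0 < m ∧ ∀ x y, 0 < matPow P m x y

/-- `π` is a stationary distribution of `P`. -/
def IsStationaryDist {𝕏 : Type} [Fintype 𝕏] (P : 𝕏 → 𝕏 → ℝ) (π : 𝕏 → ℝ) : Prop :=
  ∀ y, ∑ x, π x * P x y = π y

/-- Law of the first `n` states of the Markov chain with initial distribution `π'`
and transition matrix `P`. -/
def markovLaw {𝕏 : Type} (π' : 𝕏 → ℝ) (P : 𝕏 → 𝕏 → ℝ) : ∀ n : ℕ, (Fin n → 𝕏) → ℝ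
  | 0, _ => 1
  | n + 1, x => π' (x 0) * ∏ i : Fin n, P (x i.castSucc) (x i.succ)

/-- Distribution of `X_{n+1}` when `X_1 ~ μ` (i.e. `μ Pⁿ`). -/
def stepDist {𝕏 : Type} [Fintype 𝕏] [DecidableEq 𝕏] (μ : 𝕏 → ℝ) (P : 𝕏 → 𝕏 → ℝ)
    (n : ℕ) : 𝕏 → ℝ :=
  fun y => ∑ x, μ x * matPow P n x y

/-- Law of `n` i.i.d. blocks, each distributed according to `q`. -/
def iidLaw {S : Type} [Fintype S] (q : S → ℝ) (n : ℕ) (x : Fin n → S) : ℝ := ∏ i, q (x i)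

/-- Additive block distortion built from the single-letter distortion `d`. -/
def blockDist {𝕏 𝕐 : Type} (d : 𝕏 → 𝕐 → ℝ) (T : ℕ) (s : Fin T → 𝕏) (t : Fin T → 𝕐) : ℝ :=
  ∑ j, d (s j) (t j)

/-- Marginal of the distribution `q` on `𝕏^T` on the last `T - τ` coordinates
(the projection `J_τ`). -/
noncomputable def projDist {𝕏 : Type} [Fintype 𝕏] [DecidableEq 𝕏] {T : ℕ}
    (q : (Fin T → 𝕏) → ℝ) (τ : ℕ) : (Fin (T - τ) → 𝕏) → ℝ :=
  fun r => ∑ s : Fin T → 𝕏,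
    if (∀ i : Fin (T - τ), s ⟨τ + i.val, by have := i.isLt; omega⟩ = r i) then q s else 0

/-- Maximal value of the single-letter distortion measure. -/
noncomputable def Dmax {𝕏 𝕐 : Type} [Fintype 𝕏] [Fintype 𝕐] (d : 𝕏 → 𝕐 → ℝ) : ℝ :=
  ⨆ p : 𝕏 × 𝕐, d p.1 p.2

/-- Minimal strictly positive value of the single-letter distortion measure. -/
noncomputable def Dmin {𝕏 𝕐 : Type} [Fintype 𝕏] [Fintype 𝕐] (d : 𝕏 → 𝕐 → ℝ) : ℝ :=
  ⨅ p : {p : 𝕏 × 𝕐 // 0 < d p.1 p.2}, d p.1.1 p.1.2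

/-- Operational rate-distortion function under the expected distortion criterion, for the
source whose first `n` letters have law `law n` and with single-letter distortion `ρ`:
the infimum of all rates `R` for which there is a sequence of rate-`R` codes
`⟨eⁿ, fⁿ⟩` (with codebook size `2^⌊nR⌋`) whose expected normalized `n`-letter distortion
has `limsup` at most `D`. -/
noncomputable def RDE {S T : Type} [Fintype S]
    (law : ∀ n : ℕ, (Fin n → S) → ℝ) (ρ : S → T → ℝ) (D : ℝ) : ℝ :=
  sInf {R : ℝ |
    ∃ enc : ∀ n : ℕ, (Fin n → S) → Fin (2 ^ ⌊(n : ℝ) * R⌋₊),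
    ∃ dec : ∀ n : ℕ, Fin (2 ^ ⌊(n : ℝ) * R⌋₊) → (Fin n → T),
      Filter.limsup (fun n : ℕ =>
        ∑ x : Fin n → S, law n x * ((n : ℝ)⁻¹ *
          ∑ i, ρ (x i) (dec n (enc n x) i))) Filter.atTop ≤ D}

/-- Operational rate-distortion function of the Markov source `X_{[π',P]}`. -/
noncomputable def markovRDE {𝕏 : Type} [Fintype 𝕏]
    (π' : 𝕏 → ℝ) (P : 𝕏 → 𝕏 → ℝ) (d : 𝕏 → 𝕏 → ℝ) (D : ℝ) : ℝ :=
  RDE (markovLaw π' P) d D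

/-- Operational rate-distortion function of the block-independent approximation
(BIA) `X^T_{[π',P]}` source. -/
noncomputable def biaRDE {𝕏 : Type} [Fintype 𝕏]
    (π' : 𝕏 → ℝ) (P : 𝕏 → 𝕏 → ℝ) (d : 𝕏 → 𝕏 → ℝ) (T : ℕ) (Δ : ℝ) : ℝ :=
  RDE (iidLaw (markovLaw π' P T)) (blockDist d T) Δ

/-- Operational rate-distortion function of the vector i.i.d. `J_τ(X^T_{[π',P]})` source. -/
noncomputable def projRDE {𝕏 : Type} [Fintype 𝕏] [DecidableEq 𝕏]
    (π' : 𝕏 → ℝ) (P : 𝕏 → 𝕏 → ℝ) (d : 𝕏 → 𝕏 → ℝ) (T τ : ℕ) (Δ : ℝ) : ℝ :=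
  RDE (iidLaw (projDist (markovLaw π' P T) τ)) (blockDist d (T - τ)) Δ

/-- `δ^{(τ)}`: the `l¹` distance between the distribution of `X_{τ+1}` under `X_{[π',P]}`
and the stationary distribution `π`. -/
def l1dev {𝕏 : Type} [Fintype 𝕏] [DecidableEq 𝕏]
    (π' : 𝕏 → ℝ) (P : 𝕏 → 𝕏 → ℝ) (π : 𝕏 → ℝ) (τ : ℕ) : ℝ :=
  ∑ x, |stepDist π' P τ x - π x|

/-!
A rate-`R` code for the blocks `X^T` gives one for the suffixes `J_τ(X^T)`: encode, for each
suffix sequence, a preimage block sequence of least suffix distortion, and keep only the suffix of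
the decoded blocks. Averaging over the fibers, this costs no more than the original code, and
dropping coordinates only lowers the additive distortion. Conversely, a code for the suffixes is a
code for the blocks once the reproduction is padded with an arbitrary prefix of length `τ`, which
costs at most `τ D_max` per block. Hence the sets of achievable rates are nested, and comparing
their infima gives both inequalities; lossless codes at rate `|𝕏^T|` keep these sets nonempty.
-/

namespace RateDistortion

/-- In `ℝ`, `sInf` is `0` on sets unbounded below, whence the hypothesis `hneg`. -/
theorem sInf_le_sInf_of_subset_of_Iio_subset {A B : Set ℝ} (hBA : B ⊆ A) (hB : B.Nonempty)
    (hneg : ∀ R ∈ B, R < 0 → Set.Iio 0 ⊆ B) : sInf A ≤ sInf B := by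
  by_cases hA : BddBelow A
  · exact csInf_le_csInf hA hB hBA
  rw [Real.sInf_of_not_bddBelow hA]
  by_cases hBneg : ∃ R ∈ B, R < 0
  · obtain ⟨R, hR, hR0⟩ := hBneg
    have hBunb : ¬ BddBelow B := fun h => not_bddBelow_Iio 0 (h.mono (hneg R hR hR0))
    rw [Real.sInf_of_not_bddBelow hBunb]
  · push Not at hBneg
    exact Real.sInf_nonneg hBneg

theorem limsup_le_limsup_add_const {a b : ℕ → ℝ} {c : ℝ} (h : ∀ n, a n ≤ b n + c)
    (ha : BddBelow (Set.range a)) (hb : BddBelow (Set.range b)) (hb' : BddAbove (Set.range b)) :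
    limsup a atTop ≤ limsup b atTop + c := by
  obtain ⟨M, hM⟩ := hb'
  calc limsup a atTop ≤ limsup (fun n => b n + c) atTop :=
        limsup_le_limsup (Eventually.of_forall h) ha.isBoundedUnder_of_range.isCoboundedUnder_le
          (isBoundedUnder_of ⟨M + c, fun n => add_le_add_left (hM ⟨n, rfl⟩) c⟩)
    _ = limsup b atTop + c :=
        limsup_add_const atTop b c (isBoundedUnder_of ⟨M, fun n => hM ⟨n, rfl⟩⟩)
          hb.isBoundedUnder_of_range.isCoboundedUnder_le

section Distortion

variable {S T : Type}

noncomputable def avgDistortion (ρ : S → T → ℝ) {n : ℕ} (x : Fin n → S) (y : Fin n → T) : ℝ :=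
  (n : ℝ)⁻¹ * ∑ i, ρ (x i) (y i)

noncomputable def expectedDistortion [Fintype S] {n : ℕ} (p : (Fin n → S) → ℝ) (ρ : S → T → ℝ)
    (code : (Fin n → S) → Fin n → T) : ℝ :=
  ∑ x, p x * avgDistortion ρ x (code x)

variable {ρ : S → T → ℝ} {n : ℕ}

theorem avgDistortion_nonneg (hρ : ∀ s t, 0 ≤ ρ s t) (x : Fin n → S) (y : Fin n → T) :
    0 ≤ avgDistortion ρ x y :=
  mul_nonneg (by positivity) (sum_nonneg fun i _ => hρ _ _)

theorem avgDistortion_le_add {S' T' : Type} {ρ' : S' → T' → ℝ} {c : ℝ} (hc : 0 ≤ c)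
    {x : Fin n → S} {y : Fin n → T} {x' : Fin n → S'} {y' : Fin n → T'}
    (h : ∀ i, ρ (x i) (y i) ≤ ρ' (x' i) (y' i) + c) :
    avgDistortion ρ x y ≤ avgDistortion ρ' x' y' + c := by
  unfold avgDistortion
  have hsum : ∑ i, ρ (x i) (y i) ≤ ∑ i, ρ' (x' i) (y' i) + n * c := by
    simpa [sum_add_distrib] using sum_le_sum fun i (_ : i ∈ univ) => h i
  have hnc : (n : ℝ)⁻¹ * (n * c) ≤ c := by
    rcases n.eq_zero_or_pos with rfl | hn
    · simpa using hc
    · rw [inv_mul_cancel_left₀ (by positivity)]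
  calc (n : ℝ)⁻¹ * ∑ i, ρ (x i) (y i) ≤ (n : ℝ)⁻¹ * (∑ i, ρ' (x' i) (y' i) + n * c) := by
        gcongr
    _ ≤ (n : ℝ)⁻¹ * ∑ i, ρ' (x' i) (y' i) + c := by rw [mul_add]; linarith

theorem avgDistortion_le {c : ℝ} (hc : 0 ≤ c) (hρ : ∀ s t, ρ s t ≤ c)
    (x : Fin n → S) (y : Fin n → T) : avgDistortion ρ x y ≤ c := by
  simpa [avgDistortion] using
    avgDistortion_le_add (ρ' := fun (_ : S) (_ : T) => (0 : ℝ)) hc (x' := x) (y' := y)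
      fun i => by simpa using hρ (x i) (y i)

theorem avgDistortion_mono {S' T' : Type} {ρ' : S' → T' → ℝ}
    {x : Fin n → S} {y : Fin n → T} {x' : Fin n → S'} {y' : Fin n → T'}
    (h : ∀ i, ρ (x i) (y i) ≤ ρ' (x' i) (y' i)) :
    avgDistortion ρ x y ≤ avgDistortion ρ' x' y' := by
  simpa using avgDistortion_le_add le_rfl fun i => by simpa using h i

variable [Fintype S] {p : (Fin n → S) → ℝ}

theorem expectedDistortion_nonneg (hp : ∀ x, 0 ≤ p x) (hρ : ∀ s t, 0 ≤ ρ s t)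
    (code : (Fin n → S) → Fin n → T) : 0 ≤ expectedDistortion p ρ code :=
  sum_nonneg fun x _ => mul_nonneg (hp x) (avgDistortion_nonneg hρ _ _)

theorem expectedDistortion_le {c : ℝ} (hp : ∀ x, 0 ≤ p x) (hp1 : ∑ x, p x = 1) (hc : 0 ≤ c)
    (hρ : ∀ s t, ρ s t ≤ c) (code : (Fin n → S) → Fin n → T) :
    expectedDistortion p ρ code ≤ c :=
  calc expectedDistortion p ρ code ≤ ∑ x, p x * c :=
        sum_le_sum fun x _ => mul_le_mul_of_nonneg_left (avgDistortion_le hc hρ _ _) (hp x)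
    _ = c := by rw [← sum_mul, hp1, one_mul]

end Distortion

section Codes

variable {S T : Type} [Fintype S]

def achievableRates (law : ∀ n : ℕ, (Fin n → S) → ℝ) (ρ : S → T → ℝ) (D : ℝ) : Set ℝ :=
  {R : ℝ | ∃ enc : ∀ n : ℕ, (Fin n → S) → Fin (2 ^ ⌊(n : ℝ) * R⌋₊),
    ∃ dec : ∀ n : ℕ, Fin (2 ^ ⌊(n : ℝ) * R⌋₊) → (Fin n → T),
      limsup (fun n => expectedDistortion (law n) ρ fun x => dec n (enc n x)) atTop ≤ D}

variable {law : ∀ n : ℕ, (Fin n → S) → ℝ} {ρ : S → T → ℝ} {D : ℝ}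

theorem RDE_eq_sInf_achievableRates : RDE law ρ D = sInf (achievableRates law ρ D) := rfl

theorem mem_achievableRates_of_floor_eq {R R' : ℝ} (h : ∀ n : ℕ, ⌊(n : ℝ) * R⌋₊ = ⌊(n : ℝ) * R'⌋₊)
    (hR : R ∈ achievableRates law ρ D) : R' ∈ achievableRates law ρ D := by
  obtain ⟨enc, dec, hlim⟩ := hR
  have h2 : ∀ n : ℕ, 2 ^ ⌊(n : ℝ) * R⌋₊ = 2 ^ ⌊(n : ℝ) * R'⌋₊ := fun n => by rw [h n]
  refine ⟨fun n x => Fin.cast (h2 n) (enc n x), fun n j => dec n (Fin.cast (h2 n).symm j), ?_⟩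
  simpa only [Fin.cast_cast, Fin.cast_eq_self] using hlim

/-- All negative rates give codebooks of size `1`, so they are achievable together or not at all. -/
theorem Iio_subset_achievableRates {R : ℝ} (hR : R ∈ achievableRates law ρ D) (hR0 : R < 0) :
    Set.Iio 0 ⊆ achievableRates law ρ D := by
  intro R' (hR' : R' < 0)
  refine mem_achievableRates_of_floor_eq (fun n => ?_) hR
  rw [Nat.floor_eq_zero.2 (by nlinarith [n.cast_nonneg (α := ℝ)]),
    Nat.floor_eq_zero.2 (by nlinarith [n.cast_nonneg (α := ℝ)])]

theorem card_mem_achievableRates [Nonempty S] {ρ : S → S → ℝ} (hρ : ∀ s, ρ s s = 0)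
    (hD : 0 ≤ D) : (Fintype.card S : ℝ) ∈ achievableRates law ρ D := by
  have hcard : ∀ n : ℕ, Fintype.card (Fin n → S) ≤ 2 ^ ⌊(n : ℝ) * Fintype.card S⌋₊ := by
    intro n
    rw [← Nat.cast_mul, Nat.floor_natCast, Fintype.card_fun, Fintype.card_fin, mul_comm, pow_mul]
    exact Nat.pow_le_pow_left (Nat.lt_two_pow_self).le n
  have hemb : ∀ n : ℕ, Nonempty ((Fin n → S) ↪ Fin (2 ^ ⌊(n : ℝ) * Fintype.card S⌋₊)) :=
    fun n => Function.Embedding.nonempty_of_card_le (by simpa using hcard n)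
  let enc n := (hemb n).some
  refine ⟨fun n => enc n, fun n => Function.invFun (enc n), ?_⟩
  have hzero (n : ℕ) :
      expectedDistortion (law n) ρ (fun x => Function.invFun (enc n) (enc n x)) = 0 := by
    simp [expectedDistortion, avgDistortion, Function.leftInverse_invFun (enc n).injective _, hρ]
  simpa [hzero] using hD

theorem RDE_le_RDE_of_achievableRates_subset {S' T' : Type} [Fintype S']
    {law' : ∀ n : ℕ, (Fin n → S') → ℝ} {ρ' : S' → T' → ℝ} {D' : ℝ}
    (h : achievableRates law' ρ' D' ⊆ achievableRates law ρ D)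
    (hne : (achievableRates law' ρ' D').Nonempty) : RDE law ρ D ≤ RDE law' ρ' D' := by
  simp only [RDE_eq_sInf_achievableRates]
  exact sInf_le_sInf_of_subset_of_Iio_subset h hne fun _ hR hR0 => Iio_subset_achievableRates hR hR0

end Codes

section Pushforward

variable {A B : Type} [Fintype A] [DecidableEq B]

def pushforward (φ : A → B) (w : A → ℝ) (b : B) : ℝ := ∑ a with φ a = b, w a

theorem pushforward_nonneg {w : A → ℝ} (hw : ∀ a, 0 ≤ w a) (φ : A → B) (b : B) :
    0 ≤ pushforward φ w b :=
  sum_nonneg fun a _ => hw a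

variable [Fintype B]

theorem sum_pushforward_mul (φ : A → B) (w : A → ℝ) (f : B → ℝ) :
    ∑ b, pushforward φ w b * f b = ∑ a, w a * f (φ a) := by
  simp only [pushforward, sum_mul]
  rw [← sum_fiberwise univ φ]
  exact sum_congr rfl fun b _ => sum_congr rfl fun a ha => by rw [(mem_filter.1 ha).2]

theorem sum_pushforward (φ : A → B) (w : A → ℝ) : ∑ b, pushforward φ w b = ∑ a, w a := by
  simpa using sum_pushforward_mul φ w 1

/-- Choosing in every fiber a point minimising `f` can only decrease the `w`-average of `f`. -/
theorem exists_section_sum_pushforward_mul_le {φ : A → B} (hφ : Function.Surjective φ)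
    {w : A → ℝ} (hw : ∀ a, 0 ≤ w a) (f : A → ℝ) :
    ∃ σ : B → A, (∀ b, φ (σ b) = b) ∧ ∑ b, pushforward φ w b * f (σ b) ≤ ∑ a, w a * f a := by
  have hmin : ∀ b, ∃ a ∈ univ.filter (φ · = b), ∀ a' ∈ univ.filter (φ · = b), f a ≤ f a' :=
    fun b => exists_min_image _ f (by simpa [Finset.Nonempty] using hφ b)
  choose σ hσ hσmin using hmin
  refine ⟨σ, fun b => (mem_filter.1 (hσ b)).2, ?_⟩
  calc ∑ b, pushforward φ w b * f (σ b) = ∑ b, ∑ a with φ a = b, w a * f (σ b) := by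
        simp only [pushforward, sum_mul]
    _ ≤ ∑ b, ∑ a with φ a = b, w a * f a :=
        sum_le_sum fun b _ => sum_le_sum fun a ha =>
          mul_le_mul_of_nonneg_left (hσmin b a ha) (hw a)
    _ = ∑ a, w a * f a := sum_fiberwise _ _ _

end Pushforward

section IidLaw

variable {S : Type} [Fintype S] {q : S → ℝ}

theorem iidLaw_nonneg (hq : ∀ s, 0 ≤ q s) (n : ℕ) (x : Fin n → S) : 0 ≤ iidLaw q n x :=
  prod_nonneg fun _ _ => hq _

theorem sum_iidLaw (hq : ∑ s, q s = 1) (n : ℕ) : ∑ x, iidLaw q n x = 1 := by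
  classical
  simp [iidLaw, ← Fintype.piFinset_univ, ← prod_univ_sum, hq]

theorem iidLaw_pushforward {S' : Type} [Fintype S'] [DecidableEq S'] (φ : S → S') (q : S → ℝ)
    (n : ℕ) : iidLaw (pushforward φ q) n = pushforward (φ ∘ ·) (iidLaw q n) := by
  funext y
  have hfiber : Fintype.piFinset (fun i => univ.filter (φ · = y i)) = univ.filter (φ ∘ · = y) := by
    ext x
    simp [Fintype.mem_piFinset, funext_iff]
  simp only [iidLaw, pushforward, prod_univ_sum, hfiber]

end IidLaw

section Transfer

variable {S T S' T' : Type} [Fintype S] [Fintype S'] [DecidableEq S'] {φ : S → S'}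
  {q : S → ℝ} {ρ : S → T → ℝ} {ρ' : S' → T' → ℝ} {M : ℝ}

theorem achievableRates_subset_pushforward (hφ : Function.Surjective φ) (ψ : T → T')
    (hq0 : ∀ s, 0 ≤ q s) (hq1 : ∑ s, q s = 1) (hρM : ∀ s t, ρ s t ≤ M)
    (hρ'0 : ∀ s t, 0 ≤ ρ' s t) (h : ∀ s t, ρ' (φ s) (ψ t) ≤ ρ s t) (D : ℝ) :
    achievableRates (iidLaw q) ρ D ⊆ achievableRates (iidLaw (pushforward φ q)) ρ' D := by
  rintro R ⟨enc, dec, hlim⟩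
  have hsection : ∀ n, ∃ σ : (Fin n → S') → Fin n → S, (∀ y, φ ∘ σ y = y) ∧
      ∑ y, pushforward (φ ∘ ·) (iidLaw q n) y *
          avgDistortion ρ' (φ ∘ σ y) (ψ ∘ dec n (enc n (σ y)))
        ≤ ∑ x, iidLaw q n x * avgDistortion ρ' (φ ∘ x) (ψ ∘ dec n (enc n x)) :=
    fun n => exists_section_sum_pushforward_mul_le hφ.comp_left (iidLaw_nonneg hq0 n)
      fun x => avgDistortion ρ' (φ ∘ x) (ψ ∘ dec n (enc n x))
  choose σ hσ hσle using hsection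
  refine ⟨fun n y => enc n (σ n y), fun n j => ψ ∘ dec n j, le_trans ?_ hlim⟩
  have hpt : ∀ n, expectedDistortion (iidLaw (pushforward φ q) n) ρ'
      (fun y => ψ ∘ dec n (enc n (σ n y)))
        ≤ expectedDistortion (iidLaw q n) ρ (fun x => dec n (enc n x)) := fun n =>
    calc _ = ∑ y, pushforward (φ ∘ ·) (iidLaw q n) y *
          avgDistortion ρ' (φ ∘ σ n y) (ψ ∘ dec n (enc n (σ n y))) := by
          rw [expectedDistortion, iidLaw_pushforward]
          exact sum_congr rfl fun y _ => by rw [hσ n y]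
      _ ≤ _ := hσle n
      _ ≤ _ := sum_le_sum fun x _ => mul_le_mul_of_nonneg_left
          (avgDistortion_mono fun i => h _ _) (iidLaw_nonneg hq0 n x)
  exact limsup_le_limsup (Eventually.of_forall hpt)
    (isCoboundedUnder_le_of_le atTop fun n => expectedDistortion_nonneg
      (iidLaw_nonneg (pushforward_nonneg hq0 φ) n) hρ'0 _)
    (isBoundedUnder_of ⟨max M 0, fun n => expectedDistortion_le (iidLaw_nonneg hq0 n)
      (sum_iidLaw hq1 n) (le_max_right M 0) (fun s t => (hρM s t).trans (le_max_left M 0)) _⟩)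

theorem achievableRates_pushforward_subset (ψ : T' → T) (hq0 : ∀ s, 0 ≤ q s)
    (hq1 : ∑ s, q s = 1) (hρ0 : ∀ s t, 0 ≤ ρ s t) (hρ'0 : ∀ s t, 0 ≤ ρ' s t)
    (hρ'M : ∀ s t, ρ' s t ≤ M) {c : ℝ} (hc : 0 ≤ c) (h : ∀ s t, ρ s (ψ t) ≤ ρ' (φ s) t + c)
    (D : ℝ) :
    achievableRates (iidLaw (pushforward φ q)) ρ' D ⊆ achievableRates (iidLaw q) ρ (D + c) := by
  rintro R ⟨enc, dec, hlim⟩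
  refine ⟨fun n x => enc n (φ ∘ x), fun n j => ψ ∘ dec n j, ?_⟩
  have hq'0 := iidLaw_nonneg (pushforward_nonneg hq0 φ)
  have hq'1 := sum_iidLaw (q := pushforward φ q) (by rw [sum_pushforward, hq1])
  have hpt : ∀ n, expectedDistortion (iidLaw q n) ρ (fun x => ψ ∘ dec n (enc n (φ ∘ x)))
      ≤ expectedDistortion (iidLaw (pushforward φ q) n) ρ' (fun y => dec n (enc n y)) + c :=
    fun n => calc
      _ ≤ ∑ x, iidLaw q n x * (avgDistortion ρ' (φ ∘ x) (dec n (enc n (φ ∘ x))) + c) :=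
          sum_le_sum fun x _ => mul_le_mul_of_nonneg_left
            (avgDistortion_le_add hc fun i => h _ _) (iidLaw_nonneg hq0 n x)
      _ = ∑ x, iidLaw q n x * avgDistortion ρ' (φ ∘ x) (dec n (enc n (φ ∘ x))) + c := by
          simp only [mul_add, sum_add_distrib, ← sum_mul, sum_iidLaw hq1, one_mul]
      _ = _ := by rw [expectedDistortion, iidLaw_pushforward, sum_pushforward_mul]
  refine (limsup_le_limsup_add_const hpt ⟨0, ?_⟩ ⟨0, ?_⟩ ⟨max M 0, ?_⟩).trans
    (add_le_add_left hlim c)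
  all_goals rintro _ ⟨n, rfl⟩
  · exact expectedDistortion_nonneg (iidLaw_nonneg hq0 n) hρ0 _
  · exact expectedDistortion_nonneg (hq'0 n) hρ'0 _
  · exact expectedDistortion_le (hq'0 n) (hq'1 n) (le_max_right M 0)
      (fun s t => (hρ'M s t).trans (le_max_left M 0)) _

end Transfer

section MarkovLaw

variable {𝕏 : Type} {π' : 𝕏 → ℝ} {P : 𝕏 → 𝕏 → ℝ}

theorem markovLaw_nonneg (hπ' : ∀ x, 0 ≤ π' x) (hP : ∀ x y, 0 ≤ P x y) (n : ℕ)
    (x : Fin n → 𝕏) : 0 ≤ markovLaw π' P n x := by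
  cases n with
  | zero => exact zero_le_one
  | succ n => exact mul_nonneg (hπ' _) (prod_nonneg fun _ _ => hP _ _)

theorem markovLaw_cons (π' : 𝕏 → ℝ) (P : 𝕏 → 𝕏 → ℝ) (n : ℕ) (a : 𝕏) (y : Fin (n + 1) → 𝕏) :
    markovLaw π' P (n + 2) (Fin.cons a y) = π' a * markovLaw (P a) P (n + 1) y := by
  simp [markovLaw, Fin.prod_univ_succ]

variable [Fintype 𝕏]

theorem sum_markovLaw_succ (hP : ∀ x, ∑ y, P x y = 1) (π' : 𝕏 → ℝ) (n : ℕ) :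
    ∑ x, markovLaw π' P (n + 1) x = ∑ a, π' a := by
  induction n generalizing π' with
  | zero =>
    have h (x : Fin 1 → 𝕏) : markovLaw π' P 1 x = π' (x 0) := by simp [markovLaw]
    simp only [h]
    exact (Equiv.funUnique (Fin 1) 𝕏).sum_comp π'
  | succ n ih =>
    have hcons (a : 𝕏) (y : Fin (n + 1) → 𝕏) : markovLaw π' P (n + 2)
        (Fin.consEquiv (fun _ => 𝕏) (a, y)) = π' a * markovLaw (P a) P (n + 1) y :=
      markovLaw_cons π' P n a y
    rw [← (Fin.consEquiv fun _ => 𝕏).sum_comp, Fintype.sum_prod_type]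
    simp only [hcons, ← mul_sum, ih, hP, mul_one]

theorem sum_markovLaw (hπ' : ∑ x, π' x = 1) (hP : ∀ x, ∑ y, P x y = 1) (n : ℕ) :
    ∑ x, markovLaw π' P n x = 1 := by
  cases n with
  | zero => simp [markovLaw]
  | succ n => rw [sum_markovLaw_succ hP, hπ']

end MarkovLaw

section Suffix

variable {α : Type} {T τ : ℕ}

def suffixEmb (T τ : ℕ) : Fin (T - τ) ↪ Fin T :=
  ⟨fun i => ⟨τ + i, by omega⟩, fun a b h => Fin.ext (by simpa using congrArg Fin.val h)⟩

theorem suffixEmb_apply_val (i : Fin (T - τ)) : (suffixEmb T τ i : ℕ) = τ + i := rfl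

def suffix (T τ : ℕ) (s : Fin T → α) : Fin (T - τ) → α := s ∘ suffixEmb T τ

def padPrefix (x0 : α) (r : Fin (T - τ) → α) : Fin T → α :=
  fun j => if h : τ ≤ j then r ⟨j - τ, by omega⟩ else x0

theorem suffix_padPrefix (x0 : α) : Function.LeftInverse (suffix T τ) (padPrefix x0) := by
  intro r
  funext i
  simp [suffix, padPrefix, suffixEmb_apply_val]

theorem projDist_eq_pushforward [Fintype α] [DecidableEq α] (q : (Fin T → α) → ℝ) :
    projDist q τ = pushforward (suffix T τ) q := by
  funext r
  rw [projDist, pushforward, sum_filter]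
  exact sum_congr rfl fun s _ => if_congr funext_iff.symm rfl rfl

end Suffix

section BlockDist

variable {𝕏 𝕐 : Type} {d : 𝕏 → 𝕐 → ℝ}

theorem blockDist_nonneg (hd : ∀ x y, 0 ≤ d x y) (k : ℕ) (s : Fin k → 𝕏) (t : Fin k → 𝕐) :
    0 ≤ blockDist d k s t :=
  sum_nonneg fun _ _ => hd _ _

theorem blockDist_le {c : ℝ} (hd : ∀ x y, d x y ≤ c) (k : ℕ) (s : Fin k → 𝕏) (t : Fin k → 𝕐) :
    blockDist d k s t ≤ k * c := by
  simpa [blockDist] using sum_le_sum fun j (_ : j ∈ univ) => hd (s j) (t j)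

theorem blockDist_self {d : 𝕏 → 𝕏 → ℝ} (hd : ∀ x, d x x = 0) (k : ℕ) (s : Fin k → 𝕏) :
    blockDist d k s s = 0 := by
  simp [blockDist, hd]

theorem blockDist_comp_le (hd : ∀ x y, 0 ≤ d x y) {m T : ℕ} (e : Fin m ↪ Fin T)
    (u : Fin T → 𝕏) (v : Fin T → 𝕐) : blockDist d m (u ∘ e) (v ∘ e) ≤ blockDist d T u v := by
  simp only [blockDist, Function.comp_apply]
  rw [← sum_map univ e fun j => d (u j) (v j)]
  exact sum_le_sum_of_subset_of_nonneg (subset_univ _) fun _ _ _ => hd _ _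

theorem blockDist_le_comp_add {c : ℝ} (hd : ∀ x y, d x y ≤ c) {m T : ℕ} (e : Fin m ↪ Fin T)
    (u : Fin T → 𝕏) (v : Fin T → 𝕐) :
    blockDist d T u v ≤ blockDist d m (u ∘ e) (v ∘ e) + (T - m : ℕ) * c := by
  simp only [blockDist, Function.comp_apply]
  rw [← sum_add_sum_compl (univ.map e), sum_map]
  have hcompl : ∑ j ∈ (univ.map e)ᶜ, d (u j) (v j) ≤ (T - m : ℕ) * c := by
    simpa [card_compl] using sum_le_sum fun j (_ : j ∈ (univ.map e)ᶜ) => hd (u j) (v j)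
  gcongr

theorem blockDist_padPrefix_le {c : ℝ} (hd : ∀ x y, d x y ≤ c) {T τ : ℕ} (hτT : τ ≤ T)
    (y0 : 𝕐) (u : Fin T → 𝕏) (v : Fin (T - τ) → 𝕐) :
    blockDist d T u (padPrefix y0 v) ≤ blockDist d (T - τ) (suffix T τ u) v + τ * c := by
  have h := blockDist_le_comp_add hd (suffixEmb T τ) u (padPrefix y0 v)
  rwa [Nat.sub_sub_self hτT, show padPrefix y0 v ∘ suffixEmb T τ = v from
    suffix_padPrefix y0 v] at h

end BlockDist

theorem le_Dmax {𝕏 𝕐 : Type} [Fintype 𝕏] [Fintype 𝕐] (d : 𝕏 → 𝕐 → ℝ) (x : 𝕏) (y : 𝕐) :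
    d x y ≤ Dmax d :=
  le_ciSup (f := fun p : 𝕏 × 𝕐 => d p.1 p.2) (Set.finite_range _).bddAbove (x, y)

theorem Dmax_nonneg {𝕏 𝕐 : Type} [Fintype 𝕏] [Fintype 𝕐] [Nonempty 𝕏] [Nonempty 𝕐]
    {d : 𝕏 → 𝕐 → ℝ} (hd : ∀ x y, 0 ≤ d x y) : 0 ≤ Dmax d :=
  (hd (Classical.arbitrary 𝕏) (Classical.arbitrary 𝕐)).trans (le_Dmax d _ _)

section BlockSource

variable {𝕏 𝕐 : Type} [Fintype 𝕏] [DecidableEq 𝕏] [Fintype 𝕐] [Nonempty 𝕏]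
  {d : 𝕏 → 𝕐 → ℝ} {T : ℕ} {q : (Fin T → 𝕏) → ℝ}

theorem achievableRates_iidLaw_subset_projDist (hd : ∀ x y, 0 ≤ d x y) (hq0 : ∀ s, 0 ≤ q s)
    (hq1 : ∑ s, q s = 1) (τ : ℕ) (Δ : ℝ) :
    achievableRates (iidLaw q) (blockDist d T) Δ
      ⊆ achievableRates (iidLaw (projDist q τ)) (blockDist d (T - τ)) Δ := by
  rw [projDist_eq_pushforward]
  exact achievableRates_subset_pushforward (suffix_padPrefix (Classical.arbitrary 𝕏)).surjective
    (suffix T τ) hq0 hq1 (blockDist_le (le_Dmax d) T) (blockDist_nonneg hd _)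
    (fun _ _ => blockDist_comp_le hd _ _ _) Δ

theorem achievableRates_projDist_subset_iidLaw [Nonempty 𝕐] (hd : ∀ x y, 0 ≤ d x y)
    (hq0 : ∀ s, 0 ≤ q s) (hq1 : ∑ s, q s = 1) {τ : ℕ} (hτT : τ ≤ T) (Δ : ℝ) :
    achievableRates (iidLaw (projDist q τ)) (blockDist d (T - τ)) Δ
      ⊆ achievableRates (iidLaw q) (blockDist d T) (Δ + τ * Dmax d) := by
  rw [projDist_eq_pushforward]
  exact achievableRates_pushforward_subset (padPrefix (Classical.arbitrary 𝕐)) hq0 hq1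
    (blockDist_nonneg hd _) (blockDist_nonneg hd _) (blockDist_le (le_Dmax d) _)
    (mul_nonneg τ.cast_nonneg (Dmax_nonneg hd)) (blockDist_padPrefix_le (le_Dmax d) hτT _) Δ

end BlockSource

end RateDistortion

open RateDistortion

theorem bia_rd_sandwich_general
    {𝕏 : Type} [Fintype 𝕏] [DecidableEq 𝕏] (hcard : 2 ≤ Fintype.card 𝕏)
    (d : 𝕏 → 𝕏 → ℝ) (hdnn : ∀ x y, 0 ≤ d x y)
    (hdiag : ∀ x, d x x = 0)
    (P : 𝕏 → 𝕏 → ℝ) (hP : IsStochastic P)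
    (π' : 𝕏 → ℝ) (hπ' : IsProbDist π')
    (τ : ℕ) (D : ℝ)
    (T : ℕ) (hτT : τ < T) (hTD : (τ : ℝ) * Dmax d < (T : ℝ) * D) :
    projRDE π' P d T τ ((T : ℝ) * D) ≤ biaRDE π' P d T ((T : ℝ) * D) ∧
      biaRDE π' P d T ((T : ℝ) * D) ≤
        projRDE π' P d T τ ((T : ℝ) * D - (τ : ℝ) * Dmax d) := by
  have : Nonempty 𝕏 := Fintype.card_pos_iff.mp (by omega)
  have hq0 := markovLaw_nonneg hπ'.1 hP.1 T
  have hq1 := sum_markovLaw hπ'.2 hP.2 T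
  have hτD : 0 ≤ (τ : ℝ) * Dmax d := mul_nonneg τ.cast_nonneg (Dmax_nonneg hdnn)
  have hlossless {k : ℕ} {law : ∀ n, (Fin n → Fin k → 𝕏) → ℝ} {Δ : ℝ} (hΔ : 0 ≤ Δ) :
      (achievableRates law (blockDist d k) Δ).Nonempty :=
    ⟨_, card_mem_achievableRates (blockDist_self hdiag k) hΔ⟩
  refine ⟨RDE_le_RDE_of_achievableRates_subset
    (achievableRates_iidLaw_subset_projDist hdnn hq0 hq1 τ _) (hlossless (by linarith)), ?_⟩
  have hsub := achievableRates_projDist_subset_iidLaw hdnn hq0 hq1 hτT.le ((T : ℝ) * D - τ * Dmax d)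
  rw [sub_add_cancel] at hsub
  exact RDE_le_RDE_of_achievableRates_subset hsub (hlossless (by linarith))

/-- **Equation (26).** Whenever `TD > τ D_max`, the sandwich
`R^E_{J_τ(X^T_{[π',P]})}(TD) ≤ R^E_{X^T_{[π',P]}}(TD) ≤ R^E_{J_τ(X^T_{[π',P]})}(TD − τ D_max)`
holds. -/
theorem bia_rd_sandwich
    {𝕏 : Type} [Fintype 𝕏] [DecidableEq 𝕏] (hcard : 2 ≤ Fintype.card 𝕏)
    (d : 𝕏 → 𝕏 → ℝ) (hdnn : ∀ x y, 0 ≤ d x y)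
    (hdiag : ∀ x, d x x = 0) (hdpos : ∀ x y, x ≠ y → 0 < d x y)
    (P : 𝕏 → 𝕏 → ℝ) (hP : IsStochastic P) (hPia : IsIrreducibleAperiodic P)
    (π : 𝕏 → ℝ) (hπ : IsProbDist π) (hπstat : IsStationaryDist P π)
    (π' : 𝕏 → ℝ) (hπ' : IsProbDist π')
    (τ : ℕ) (hτ : 1 ≤ τ) (D : ℝ) (hD : 0 < D)
    (T : ℕ) (hτT : τ < T) (hTD : (τ : ℝ) * Dmax d < (T : ℝ) * D) :
    projRDE π' P d T τ ((T : ℝ) * D) ≤ biaRDE π' P d T ((T : ℝ) * D) ∧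
      biaRDE π' P d T ((T : ℝ) * D) ≤
        projRDE π' P d T τ ((T : ℝ) * D - (τ : ℝ) * Dmax d) :=
  bia_rd_sandwich_general hcard d hdnn hdiag P hP π' hπ' τ D T hτT hTD
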